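/- Let P, Q : ℤ → ℝ with P(n) ≠ 0 for all n, and set P̂(n) = 1/P(n), Q̂(n) = Q(n+1)/(P(n)P(n+1)). Then for every pair ξ = (ξ₁, ξ₂) of functions ℤ → ℝ one has (𝒥 ∘ 𝒫₃ ∘ 𝒥*)(ξ) = −𝒫̂₁(ξ), where 𝒫̂₁ is the operator 𝒫₁ with P replaced by P̂, Q replaced by Q̂, and the shift Λ replaced by Λ⁻¹: 𝒫̂₁(ξ) = ( Q̂ξ₁⁺ − (Q̂ξ₁)⁻ + Q̂ξ₂ − (Q̂ξ₂)⁻ , Q̂(ξ₁⁺ − ξ₁) ). -/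
import Mathlib


/-- The shift by `e`: `(shiftE e f) n = f (n + e)`; `shiftE 1 = Λ`, `shiftE (-1) = Λ⁻¹`. -/
def shiftE (e : ℤ) (f : ℤ → ℝ) : ℤ → ℝ := fun n => f (n + e)

/-- The first Hamiltonian operator of the Ablowitz–Ladik hierarchy, with the shift `Λ`
replaced by `Λᵉ`; for `e = -1` it reads
`𝒫̂₁(ξ) = ( Q̂ξ₁⁺ − (Q̂ξ₁)⁻ + Q̂ξ₂ − (Q̂ξ₂)⁻ , Q̂(ξ₁⁺ − ξ₁) )`. -/
def P1gen (e : ℤ) (Q : ℤ → ℝ) (ξ : (ℤ → ℝ) × (ℤ → ℝ)) : (ℤ → ℝ) × (ℤ → ℝ) :=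
  (Q * shiftE (-e) ξ.1 - shiftE e (Q * ξ.1) + Q * ξ.2 - shiftE e (Q * ξ.2),
   Q * (shiftE (-e) ξ.1 - ξ.1))

/-- The third Hamiltonian operator of the Ablowitz–Ladik hierarchy, with the shift `Λ`
replaced by `Λᵉ`:
`𝒫₃ = [[P(QΛ⁻¹ − ΛQ)P, P((Q − ΛQΛ)(1+Λ⁻¹) − P(1−Λ))Q],`
`      [Q((Λ+1)(Λ⁻¹QΛ⁻¹ − Q) + (1−Λ⁻¹)P)P, Q((1+Λ⁻¹)(Q − ΛQΛ)(1+Λ⁻¹) + 2(PΛ − Λ⁻¹P))Q]]`,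
where functions act by pointwise multiplication and entries are operator compositions. -/
def P3gen (e : ℤ) (P Q : ℤ → ℝ) (ξ : (ℤ → ℝ) × (ℤ → ℝ)) : (ℤ → ℝ) × (ℤ → ℝ) :=
  let g := Q * ξ.2
  let h := P * ξ.1
  let hh := g + shiftE (-e) g
  let w := Q * hh - shiftE e (Q * shiftE e hh)
  (P * (Q * shiftE (-e) h - shiftE e (Q * h))
     + P * ((Q * hh - shiftE e (Q * shiftE e hh)) - P * (g - shiftE e g)),
   Q * ((shiftE e (shiftE (-e) (Q * shiftE (-e) h) - Q * h)
          + (shiftE (-e) (Q * shiftE (-e) h) - Q * h))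
        + (P * h - shiftE (-e) (P * h)))
     + Q * ((w + shiftE (-e) w) + 2 * (P * shiftE e g - shiftE (-e) (P * g))))

/-- The gauge operator
`𝒥(ξ) = ( −ξ₁/P², −(Q⁺/(P²P⁺))ξ₁ − (Q⁺/(P(P⁺)²))ξ₁⁺ + ξ₂⁺/(PP⁺) )`. -/
noncomputable def Jgauge (P Q : ℤ → ℝ) (ξ : (ℤ → ℝ) × (ℤ → ℝ)) : (ℤ → ℝ) × (ℤ → ℝ) :=
  (fun n => -ξ.1 n / P n ^ 2,
   fun n => -(Q (n + 1) / (P n ^ 2 * P (n + 1))) * ξ.1 n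
     - (Q (n + 1) / (P n * P (n + 1) ^ 2)) * ξ.1 (n + 1)
     + ξ.2 (n + 1) / (P n * P (n + 1)))

/-- The gauge operator
`𝒥*(ξ) = ( −ξ₁/P² − (Q⁺/(P²P⁺))ξ₂ − (Q/(P²P⁻))ξ₂⁻, ξ₂⁻/(PP⁻) )`. -/
noncomputable def JgaugeStar (P Q : ℤ → ℝ) (ξ : (ℤ → ℝ) × (ℤ → ℝ)) : (ℤ → ℝ) × (ℤ → ℝ) :=
  (fun n => -ξ.1 n / P n ^ 2 - (Q (n + 1) / (P n ^ 2 * P (n + 1))) * ξ.2 n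
     - (Q n / (P n ^ 2 * P (n - 1))) * ξ.2 (n - 1),
   fun n => ξ.2 (n - 1) / (P n * P (n - 1)))

set_option maxHeartbeats 4000000 in
/-- With `P̂(n) = 1/P(n)` and `Q̂(n) = Q(n+1)/(P(n)P(n+1))`, one has
`𝒥 ∘ 𝒫₃ ∘ 𝒥* = −𝒫̂₁`, where `𝒫̂₁` is the operator `𝒫₁` with `P` replaced by `P̂`,
`Q` replaced by `Q̂`, and the shift `Λ` replaced by `Λ⁻¹`. -/
theorem gauge_P3_eq_neg_P1hat (P Q : ℤ → ℝ) (hP : ∀ n : ℤ, P n ≠ 0) :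
    ∀ ξ : (ℤ → ℝ) × (ℤ → ℝ),
      (Jgauge P Q ∘ P3gen 1 P Q ∘ JgaugeStar P Q) ξ =
        -(P1gen (-1) (fun n => Q (n + 1) / (P n * P (n + 1))) ξ) := by
  intro ξ
  refine Prod.ext ?_ ?_ <;>
  · funext n
    simp only [Function.comp_apply, Jgauge, JgaugeStar, P3gen, P1gen, shiftE,
      Prod.fst, Prod.snd, Pi.mul_apply, Pi.add_apply, Pi.sub_apply, Pi.neg_apply,
      Prod.neg_mk, Pi.ofNat_apply]
    have h1 : n + 1 + -1 = n := by ring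
    have h2 : n + -1 + 1 = n := by ring
    have h3 : n + -1 = n - 1 := by ring
    have h4 : n - 1 + 1 = n := by ring
    have h5 : n + 1 - 1 = n := by ring
    have h6 : n + 1 + 1 - 1 = n + 1 := by ring
    have h7 : n + 1 + 1 + -1 = n + 1 := by ring
    have h8 : n + - -1 = n + 1 := by ring
    have h9 : n - 1 - 1 + 1 = n - 1 := by ring
    have h10 : n - 1 + -1 = n - 1 - 1 := by ring
    have h11 : n - 1 + - -1 = n := by ring
    have h12 : n + 1 + 1 + 1 = n + 3 := by ring
    have h13 : n + 1 + 1 = n + 2 := by ring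
    have h14 : n - 1 - 1 = n - 2 := by ring
    have h15 : n + 2 - 1 = n + 1 := by ring
    have h16 : n + 2 + -1 = n + 1 := by ring
    have h17 : n + 2 + 1 = n + 3 := by ring
    have h18 : n - 2 + 1 = n - 1 := by ring
    have h19 : n - 2 + -1 = n - 3 := by ring
    have h20 : n - 2 - 1 = n - 3 := by ring
    have h21 : n - 3 + 1 = n - 2 := by ring
    have h22 : n + 3 - 1 = n + 2 := by ring
    have h23 : n + 3 + -1 = n + 2 := by ring
    simp only [h1, h2, h3, h4, h5, h6, h7, h8, h9, h10, h11, h12, h13, h14, h15,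
      h16, h17, h18, h19, h20, h21, h22, h23]
    have d1 : P n ≠ 0 := hP n
    have d2 : P (n + 1) ≠ 0 := hP (n + 1)
    have d3 : P (n + 2) ≠ 0 := hP (n + 2)
    have d4 : P (n - 1) ≠ 0 := hP (n - 1)
    have d5 : P (n - 2) ≠ 0 := hP (n - 2)
    have d6 : P (n + 3) ≠ 0 := hP (n + 3)
    have d7 : P (n - 3) ≠ 0 := hP (n - 3)
    field_simp
    ring
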